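/- arXiv:1705.05882 — 9 statements merged into one kernel-verified Lean document; each statement's English description precedes it below -/
import Mathlib

section
/- Let p_sta := max over all subsets I ⊆ {1,…,n} of [α₋ Σ_{i∈I} e_i + α₊ Σ_{i∈Iᶜ} e_i − sT] / (|I| α₋ + |Iᶜ| α₊), and for each i define q_i := α₊ (e_i − p_sta)/T if e_i ≥ p_sta and q_i := α₋ (e_i − p_sta)/T if e_i < p_sta. Then for each i the number q_i maximizes the function q ↦ q(e_i − p_sta) − T·c(q) over q ∈ ℝ, and Σ_{i=1}^n q_i = s; in particular, p_sta is a static equilibrium price. -/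
open scoped Classical

/-- Auxiliary: for `A > 0`, the point `A*d/T` maximizes `r ↦ r*d - T*(r^2/(2*A))`. -/
lemma max_aux (A d T r : ℝ) (hA : 0 < A) (hT : 0 < T) :
    r * d - T * (r ^ 2 / (2 * A)) ≤ A * d / T * d - T * ((A * d / T) ^ 2 / (2 * A)) := by
  rw [← sub_nonneg]
  have key : A * d / T * d - T * ((A * d / T) ^ 2 / (2 * A)) -
      (r * d - T * (r ^ 2 / (2 * A))) = (A * d - T * r) ^ 2 / (2 * A * T) := by
    field_simp
    ring
  rw [key]
  positivity

/-- Auxiliary: the maximal value `A*d^2/(2*T)`. -/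
lemma val_aux (A d T : ℝ) (hA : 0 < A) (hT : 0 < T) :
    A * d / T * d - T * ((A * d / T) ^ 2 / (2 * A)) = A * d ^ 2 / (2 * T) := by
  field_simp
  ring

/-- the explicit formula `p_sta` together with the portfolios `q i`
forms a static equilibrium: each `q i` maximizes the net payoff of type `i`
and the market clears. -/
theorem static_equilibrium_existence
    (n : ℕ) (hn : 1 ≤ n) (e : Fin n → ℝ) (T : ℝ) (hT : 0 < T)
    (s : ℝ) (hs : 0 ≤ s) (αm αp : ℝ) (hαm : 0 < αm) (hα : αm ≤ αp)
    (c : ℝ → ℝ) (hc : ∀ y : ℝ, c y = if 0 ≤ y then y ^ 2 / (2 * αp) else y ^ 2 / (2 * αm))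
    (psta : ℝ)
    (hpsta : psta = (Finset.univ : Finset (Finset (Fin n))).sup' Finset.univ_nonempty
      (fun I => (αm * ∑ i ∈ I, e i + αp * ∑ i ∈ Iᶜ, e i - s * T) /
        (I.card * αm + (Iᶜ).card * αp)))
    (q : Fin n → ℝ)
    (hq : ∀ i, q i = if psta ≤ e i then αp * (e i - psta) / T else αm * (e i - psta) / T) :
    (∀ i, ∀ r : ℝ, r * (e i - psta) - T * c r ≤ q i * (e i - psta) - T * c (q i)) ∧
    (∑ i, q i = s) := by
  have hαp : 0 < αp := lt_of_lt_of_le hαm hα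
  constructor
  · -- maximization
    intro i r
    rw [hq i, hc r]
    by_cases hd : psta ≤ e i
    · have hd' : 0 ≤ e i - psta := sub_nonneg.2 hd
      rw [if_pos hd, hc (αp * (e i - psta) / T)]
      have hq0 : 0 ≤ αp * (e i - psta) / T := by positivity
      rw [if_pos hq0]
      by_cases hr : 0 ≤ r
      · rw [if_pos hr]
        exact max_aux αp (e i - psta) T r hαp hT
      · rw [if_neg hr]
        push_neg at hr
        have hL : r * (e i - psta) - T * (r ^ 2 / (2 * αm)) ≤ 0 := by
          have h1 : r * (e i - psta) ≤ 0 := mul_nonpos_of_nonpos_of_nonneg hr.le hd'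
          have h2 : 0 ≤ T * (r ^ 2 / (2 * αm)) := by positivity
          linarith
        have hR : 0 ≤ αp * (e i - psta) / T * (e i - psta) -
            T * ((αp * (e i - psta) / T) ^ 2 / (2 * αp)) := by
          rw [val_aux αp (e i - psta) T hαp hT]
          positivity
        linarith
    · have hd' : e i - psta < 0 := by push_neg at hd; linarith
      rw [if_neg hd, hc (αm * (e i - psta) / T)]
      have hq0 : ¬ 0 ≤ αm * (e i - psta) / T := by
        push_neg
        exact div_neg_of_neg_of_pos (mul_neg_of_pos_of_neg hαm hd') hT
      rw [if_neg hq0]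
      by_cases hr : 0 ≤ r
      · rw [if_pos hr]
        have hL : r * (e i - psta) - T * (r ^ 2 / (2 * αp)) ≤ 0 := by
          have h1 : r * (e i - psta) ≤ 0 := mul_nonpos_of_nonneg_of_nonpos hr hd'.le
          have h2 : 0 ≤ T * (r ^ 2 / (2 * αp)) := by positivity
          linarith
        have hR : 0 ≤ αm * (e i - psta) / T * (e i - psta) -
            T * ((αm * (e i - psta) / T) ^ 2 / (2 * αm)) := by
          rw [val_aux αm (e i - psta) T hαm hT]
          positivity
        linarith
      · rw [if_neg hr]
        exact max_aux αm (e i - psta) T r hαm hT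
  · -- market clearing
    -- coefficients per subset
    set g : Fin n → ℝ := fun i =>
      if psta ≤ e i then αp * (e i - psta) else αm * (e i - psta) with hg
    have hqg : ∀ i, q i = g i / T := by
      intro i
      rw [hq i, hg]
      by_cases hd : psta ≤ e i <;> simp [hd]
    have hDpos : ∀ I : Finset (Fin n),
        0 < (I.card : ℝ) * αm + ((Iᶜ : Finset (Fin n)).card : ℝ) * αp := by
      intro I
      have hcard : (I.card : ℝ) + ((Iᶜ : Finset (Fin n)).card : ℝ) = (n : ℝ) := by
        have h := Finset.card_add_card_compl I
        rw [Fintype.card_fin] at h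
        exact_mod_cast h
      have h1 : (0:ℝ) ≤ (I.card : ℝ) := Nat.cast_nonneg _
      have h2 : (0:ℝ) ≤ ((Iᶜ : Finset (Fin n)).card : ℝ) := Nat.cast_nonneg _
      have hn' : (1:ℝ) ≤ (n:ℝ) := by exact_mod_cast hn
      nlinarith
    -- the per-subset linearized sums
    have hsum : ∀ I : Finset (Fin n),
        (∑ i, (if i ∈ I then αm * (e i - psta) else αp * (e i - psta))) =
        αm * ∑ i ∈ I, e i + αp * ∑ i ∈ Iᶜ, e i -
          psta * ((I.card : ℝ) * αm + ((Iᶜ : Finset (Fin n)).card : ℝ) * αp) := by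
      intro I
      rw [← Finset.sum_filter_add_sum_filter_not Finset.univ (· ∈ I)]
      have hf1 : Finset.univ.filter (· ∈ I) = I := by
        ext x; simp
      have hf2 : Finset.univ.filter (fun x => ¬ x ∈ I) = Iᶜ := by
        ext x; simp
      rw [Finset.sum_ite_of_true, Finset.sum_ite_of_false, hf1, hf2]
      · simp only [mul_sub, Finset.sum_sub_distrib, Finset.sum_const, nsmul_eq_mul,
          Finset.mul_sum]
        ring
      · intro i hi; simpa using hi
      · intro i hi; simpa using hi
    -- upper bound: for every I the linearized sum is at most s*T
    have hub : ∀ I : Finset (Fin n),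
        (∑ i, (if i ∈ I then αm * (e i - psta) else αp * (e i - psta))) ≤ s * T := by
      intro I
      have hle : (αm * ∑ i ∈ I, e i + αp * ∑ i ∈ Iᶜ, e i - s * T) /
          ((I.card : ℝ) * αm + ((Iᶜ : Finset (Fin n)).card : ℝ) * αp) ≤ psta := by
        rw [hpsta]
        exact Finset.le_sup' (fun I => (αm * ∑ i ∈ I, e i + αp * ∑ i ∈ Iᶜ, e i - s * T) /
          ((I.card : ℝ) * αm + ((Iᶜ : Finset (Fin n)).card : ℝ) * αp)) (Finset.mem_univ I)
      rw [div_le_iff₀ (hDpos I)] at hle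
      rw [hsum I]
      nlinarith [hDpos I]
    -- the sup is attained at some I₀
    obtain ⟨I₀, -, hI₀⟩ := Finset.exists_mem_eq_sup' (Finset.univ_nonempty :
      (Finset.univ : Finset (Finset (Fin n))).Nonempty)
      (fun I => (αm * ∑ i ∈ I, e i + αp * ∑ i ∈ Iᶜ, e i - s * T) /
        ((I.card : ℝ) * αm + ((Iᶜ : Finset (Fin n)).card : ℝ) * αp))
    have heq : (∑ i, (if i ∈ I₀ then αm * (e i - psta) else αp * (e i - psta))) = s * T := by
      have : psta = (αm * ∑ i ∈ I₀, e i + αp * ∑ i ∈ I₀ᶜ, e i - s * T) /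
          ((I₀.card : ℝ) * αm + ((I₀ᶜ : Finset (Fin n)).card : ℝ) * αp) := by
        rw [hpsta]; exact hI₀
      rw [eq_div_iff (hDpos I₀).ne'] at this
      rw [hsum I₀]
      nlinarith [hDpos I₀]
    -- g dominates every linearized coefficient choice
    have hdom : (∑ i, (if i ∈ I₀ then αm * (e i - psta) else αp * (e i - psta))) ≤ ∑ i, g i := by
      apply Finset.sum_le_sum
      intro i _
      rw [hg]
      by_cases hd : psta ≤ e i
      · simp only [if_pos hd]
        by_cases hi : i ∈ I₀
        · simp only [if_pos hi]
          have : 0 ≤ e i - psta := sub_nonneg.2 hd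
          nlinarith
        · simp [hi]
      · simp only [if_neg hd]
        push_neg at hd
        by_cases hi : i ∈ I₀
        · simp [hi]
        · simp only [if_neg hi]
          nlinarith
    -- g equals the linearized sum for the canonical subset
    have hcan : (∑ i, g i) =
        ∑ i, (if i ∈ Finset.univ.filter (fun j => ¬ psta ≤ e j) then
          αm * (e i - psta) else αp * (e i - psta)) := by
      apply Finset.sum_congr rfl
      intro i _
      by_cases hd : psta ≤ e i
      · simp [hg, hd, not_lt.mpr hd]
      · simp [hg, hd, lt_of_not_ge hd]
    have hgs : (∑ i, g i) = s * T := by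
      have h1 : (∑ i, g i) ≤ s * T := by
        rw [hcan]; exact hub _
      linarith [hdom, heq]
    have : (∑ i, q i) = (∑ i, g i) / T := by
      rw [Finset.sum_div]
      exact Finset.sum_congr rfl (fun i _ => hqg i)
    rw [this, hgs]
    field_simp
end

section
/- If p ∈ ℝ is a static equilibrium price, then p equals max over all subsets I ⊆ {1,…,n} of [α₋ Σ_{i∈I} e_i + α₊ Σ_{i∈Iᶜ} e_i − sT] / (|I| α₋ + |Iᶜ| α₊). In particular, the static equilibrium price is unique. -/
open scoped Classical


lemma key_opt (T αm αp : ℝ) (hT : 0 < T) (hαm : 0 < αm) (hαp : 0 < αp) (hα : αm ≤ αp)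
    (c : ℝ → ℝ) (hc : ∀ y : ℝ, c y = if 0 ≤ y then y ^ 2 / (2 * αp) else y ^ 2 / (2 * αm))
    (d r : ℝ)
    (hr : r ≠ (if 0 ≤ d then αp else αm) * d / T) :
    r * d - T * c r < ((if 0 ≤ d then αp else αm) * d / T) * d
      - T * c ((if 0 ≤ d then αp else αm) * d / T) := by
  by_cases hd : 0 ≤ d
  · simp only [if_pos hd] at hr ⊢
    have hv0 : 0 ≤ αp * d / T := by positivity
    rw [hc, hc, if_pos hv0]
    have hRHS : (αp * d / T) * d - T * ((αp * d / T) ^ 2 / (2 * αp)) = αp * d ^ 2 / (2 * T) := by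
      field_simp; ring
    rw [hRHS]
    by_cases hr0 : 0 ≤ r
    · rw [if_pos hr0]
      have hne : r - αp * d / T ≠ 0 := sub_ne_zero.mpr hr
      have hsq : 0 < (r - αp * d / T) ^ 2 :=
        lt_of_le_of_ne (sq_nonneg _) (Ne.symm (pow_ne_zero 2 hne))
      have hdiff : αp * d ^ 2 / (2 * T) - (r * d - T * (r ^ 2 / (2 * αp)))
          = T / (2 * αp) * (r - αp * d / T) ^ 2 := by
        field_simp; ring
      have hpos : 0 < T / (2 * αp) * (r - αp * d / T) ^ 2 :=
        mul_pos (by positivity) hsq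
      linarith
    · rw [if_neg hr0]
      push_neg at hr0
      have h1 : r * d ≤ 0 := mul_nonpos_of_nonpos_of_nonneg hr0.le hd
      have hr2 : 0 < r ^ 2 :=
        lt_of_le_of_ne (sq_nonneg _) (Ne.symm (pow_ne_zero 2 hr0.ne))
      have h2 : 0 < T * (r ^ 2 / (2 * αm)) := mul_pos hT (div_pos hr2 (by positivity))
      have h3 : 0 ≤ αp * d ^ 2 / (2 * T) := by positivity
      linarith
  · simp only [if_neg hd] at hr ⊢
    push_neg at hd
    have hv0 : ¬ (0 ≤ αm * d / T) := by
      push_neg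
      exact div_neg_of_neg_of_pos (mul_neg_of_pos_of_neg hαm hd) hT
    rw [hc, hc, if_neg hv0]
    have hRHS : (αm * d / T) * d - T * ((αm * d / T) ^ 2 / (2 * αm)) = αm * d ^ 2 / (2 * T) := by
      field_simp; ring
    rw [hRHS]
    by_cases hr0 : 0 ≤ r
    · rw [if_pos hr0]
      have h1 : r * d ≤ 0 := mul_nonpos_of_nonneg_of_nonpos hr0 hd.le
      have h2 : 0 ≤ T * (r ^ 2 / (2 * αp)) := by positivity
      have hd2 : 0 < d ^ 2 := lt_of_le_of_ne (sq_nonneg _) (Ne.symm (pow_ne_zero 2 hd.ne))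
      have h3 : 0 < αm * d ^ 2 / (2 * T) := by positivity
      linarith
    · rw [if_neg hr0]
      have hne : r - αm * d / T ≠ 0 := sub_ne_zero.mpr hr
      have hsq : 0 < (r - αm * d / T) ^ 2 :=
        lt_of_le_of_ne (sq_nonneg _) (Ne.symm (pow_ne_zero 2 hne))
      have hdiff : αm * d ^ 2 / (2 * T) - (r * d - T * (r ^ 2 / (2 * αm)))
          = T / (2 * αm) * (r - αm * d / T) ^ 2 := by
        field_simp; ring
      have hpos : 0 < T / (2 * αm) * (r - αm * d / T) ^ 2 :=
        mul_pos (by positivity) hsq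
      linarith

/-- any static equilibrium price equals the explicit max-formula;
in particular the static equilibrium price is unique. -/
theorem static_equilibrium_uniqueness
    (n : ℕ) (hn : 1 ≤ n) (e : Fin n → ℝ) (T : ℝ) (hT : 0 < T)
    (s : ℝ) (hs : 0 ≤ s) (αm αp : ℝ) (hαm : 0 < αm) (hα : αm ≤ αp)
    (c : ℝ → ℝ) (hc : ∀ y : ℝ, c y = if 0 ≤ y then y ^ 2 / (2 * αp) else y ^ 2 / (2 * αm))
    (p : ℝ)
    (hp : ∃ q : Fin n → ℝ,
      (∀ i, ∀ r : ℝ, r * (e i - p) - T * c r ≤ q i * (e i - p) - T * c (q i)) ∧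
      (∑ i, q i = s)) :
    p = (Finset.univ : Finset (Finset (Fin n))).sup' Finset.univ_nonempty
      (fun I => (αm * ∑ i ∈ I, e i + αp * ∑ i ∈ Iᶜ, e i - s * T) /
        (I.card * αm + (Iᶜ).card * αp)) := by
  have hαp : 0 < αp := lt_of_lt_of_le hαm hα
  obtain ⟨q, hq, hsum⟩ := hp
  set w : Fin n → ℝ := fun i => if 0 ≤ e i - p then αp else αm with hw
  -- each q i equals the unique optimizer
  have hqv : ∀ i, q i = w i * (e i - p) / T := by
    intro i
    by_contra hne
    have h2 := key_opt T αm αp hT hαm hαp hα c hc (e i - p) (q i) hne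
    have h1 := hq i (w i * (e i - p) / T)
    simp only [hw] at h1 h2
    linarith
  -- the market clearing identity
  have hkey : ∑ i, w i * (e i - p) = s * T := by
    rw [← hsum, Finset.sum_mul]
    exact Finset.sum_congr rfl fun i _ => by
      rw [hqv i, div_mul_cancel₀ _ hT.ne']
  -- denominator positivity
  have hD : ∀ I : Finset (Fin n), 0 < (I.card : ℝ) * αm + ((Iᶜ).card : ℝ) * αp := by
    intro I
    have hcard : (I.card : ℝ) + ((Iᶜ).card : ℝ) = (n : ℝ) := by
      rw [← Nat.cast_add, Finset.card_add_card_compl, Fintype.card_fin]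
    have hn' : (1 : ℝ) ≤ (n : ℝ) := by exact_mod_cast hn
    have h1 : (0:ℝ) ≤ (I.card : ℝ) := Nat.cast_nonneg _
    have h2 : (0:ℝ) ≤ ((Iᶜ).card : ℝ) := Nat.cast_nonneg _
    nlinarith [mul_nonneg h2 (sub_nonneg.mpr hα)]
  -- sum decomposition lemma for any I
  have hexp : ∀ (I : Finset (Fin n)) (a : ℝ),
      ∑ i ∈ I, a * (e i - p) = a * (∑ i ∈ I, e i) - (I.card : ℝ) * a * p := by
    intro I a
    simp only [mul_sub, Finset.sum_sub_distrib, Finset.sum_const, nsmul_eq_mul,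
      Finset.mul_sum]
    ring
  -- upper bound for every I
  have upper : ∀ I : Finset (Fin n),
      αm * ∑ i ∈ I, e i + αp * ∑ i ∈ Iᶜ, e i - s * T
        ≤ p * ((I.card : ℝ) * αm + ((Iᶜ).card : ℝ) * αp) := by
    intro I
    have hsplit := Finset.sum_add_sum_compl I (fun i => w i * (e i - p))
    rw [hkey] at hsplit
    have h1 : ∑ i ∈ I, αm * (e i - p) ≤ ∑ i ∈ I, w i * (e i - p) := by
      refine Finset.sum_le_sum fun i _ => ?_
      simp only [hw]
      split_ifs with h
      · exact mul_le_mul_of_nonneg_right hα h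
      · exact le_rfl
    have h2 : ∑ i ∈ Iᶜ, αp * (e i - p) ≤ ∑ i ∈ Iᶜ, w i * (e i - p) := by
      refine Finset.sum_le_sum fun i _ => ?_
      simp only [hw]
      split_ifs with h
      · exact le_rfl
      · push_neg at h
        exact mul_le_mul_of_nonpos_right hα h.le
    have e1 := hexp I αm
    have e2 := hexp Iᶜ αp
    linarith
  -- the witness set achieving equality
  set I0 : Finset (Fin n) := Finset.univ.filter (fun i => ¬ 0 ≤ e i - p) with hI0
  have hNI0 : αm * ∑ i ∈ I0, e i + αp * ∑ i ∈ I0ᶜ, e i - s * T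
      = p * ((I0.card : ℝ) * αm + ((I0ᶜ).card : ℝ) * αp) := by
    have hsplit := Finset.sum_add_sum_compl I0 (fun i => w i * (e i - p))
    rw [hkey] at hsplit
    have h1 : ∑ i ∈ I0, w i * (e i - p) = ∑ i ∈ I0, αm * (e i - p) := by
      refine Finset.sum_congr rfl fun i hi => ?_
      simp only [hI0, Finset.mem_filter] at hi
      simp only [hw, if_neg hi.2]
    have h2 : ∑ i ∈ I0ᶜ, w i * (e i - p) = ∑ i ∈ I0ᶜ, αp * (e i - p) := by
      refine Finset.sum_congr rfl fun i hi => ?_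
      simp only [hI0, Finset.mem_compl, Finset.mem_filter, Finset.mem_univ, true_and,
        not_not] at hi
      simp only [hw, if_pos hi]
    have e1 := hexp I0 αm
    have e2 := hexp I0ᶜ αp
    rw [h1, e1, h2, e2] at hsplit
    linarith
  refine le_antisymm ?_ ?_
  · have hfI0 : (αm * ∑ i ∈ I0, e i + αp * ∑ i ∈ I0ᶜ, e i - s * T) /
        ((I0.card : ℝ) * αm + ((I0ᶜ).card : ℝ) * αp) = p := by
      rw [hNI0, mul_div_assoc, div_self (hD I0).ne', mul_one]
    calc p = _ := hfI0.symm
      _ ≤ _ := Finset.le_sup'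
        (fun I : Finset (Fin n) => (αm * ∑ i ∈ I, e i + αp * ∑ i ∈ Iᶜ, e i - s * T) /
          ((I.card : ℝ) * αm + ((Iᶜ).card : ℝ) * αp)) (Finset.mem_univ I0)
  · refine Finset.sup'_le _ _ fun I _ => ?_
    rw [div_le_iff₀ (hD I)]
    exact upper I
end

section
/- Let ℓ₁,…,ℓₙ ∈ ℝ, let s ≥ 0, and let 0 < α₋ ≤ α₊ and 0 < α'₋ ≤ α'₊ satisfy α₊/α₋ ≤ α'₊/α'₋ and α₋ ≤ α'₋. If max over subsets I ⊆ {1,…,n} of (α₋ Σ_{i∈I} ℓ_i + α₊ Σ_{i∈Iᶜ} ℓ_i) = s, then max over subsets I ⊆ {1,…,n} of (α'₋ Σ_{i∈I} ℓ_i + α'₊ Σ_{i∈Iᶜ} ℓ_i) ≥ s. -/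
/-! Choosing `I` independently for each index, the maximum of `αm Σ_I ℓ + αp Σ_Iᶜ ℓ` is
`Σ_i max (αm ℓ_i) (αp ℓ_i)`. Termwise, `αm · max (αm' ℓ) (αp' ℓ) ≥ αm' · max (αm ℓ) (αp ℓ)`: for
`ℓ ≥ 0` this is the ratio condition, and for `ℓ < 0` the unprimed maximum is `αm ℓ` because
`αm ≤ αp`. Hence the primed maximum is at least `(αm' / αm) s ≥ s`. -/

open Finset

section SubsetSup

variable {ι M : Type*} [Fintype ι] [DecidableEq ι] [AddCommMonoid M]

theorem sum_add_sum_compl_eq_sum_piecewise (I : Finset ι) (f g : ι → M) :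
    ∑ i ∈ I, f i + ∑ i ∈ Iᶜ, g i = ∑ i, I.piecewise f g i := by
  rw [sum_piecewise, univ_inter, ← compl_eq_univ_sdiff]

variable [LinearOrder M] [IsOrderedAddMonoid M]

theorem sup'_sum_add_sum_compl_eq_sum_max (f g : ι → M) :
    (univ : Finset (Finset ι)).sup' univ_nonempty (fun I => ∑ i ∈ I, f i + ∑ i ∈ Iᶜ, g i) =
      ∑ i, max (f i) (g i) := by
  apply le_antisymm
  · refine sup'_le _ _ fun I _ => ?_
    rw [sum_add_sum_compl_eq_sum_piecewise]
    refine sum_le_sum fun i _ => ?_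
    by_cases hi : i ∈ I <;> simp [hi]
  · refine le_sup'_of_le (fun I => ∑ i ∈ I, f i + ∑ i ∈ Iᶜ, g i)
      (mem_univ (univ.filter fun i => g i ≤ f i)) ?_
    rw [sum_add_sum_compl_eq_sum_piecewise]
    refine sum_le_sum fun i _ => ?_
    by_cases hi : g i ≤ f i <;> simp [hi, le_of_not_ge]

end SubsetSup

theorem mul_max_le_mul_max_of_mul_le_mul {a b a' b' x : ℝ} (ha : 0 < a) (hab : a ≤ b)
    (hratio : a' * b ≤ a * b') :
    a' * max (a * x) (b * x) ≤ a * max (a' * x) (b' * x) := by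
  rcases le_or_gt 0 x with hx | hx
  · rw [max_eq_right (by gcongr)]
    nlinarith [le_max_right (a' * x) (b' * x)]
  · rw [max_eq_left (mul_le_mul_of_nonpos_right hab hx.le)]
    nlinarith [le_max_left (a' * x) (b' * x)]

theorem hamiltonian_ratio_comparison_general
    (n : ℕ) (ℓ : Fin n → ℝ) (s : ℝ) (hs : 0 ≤ s)
    (αm αp αm' αp' : ℝ)
    (h1 : 0 < αm) (h2 : αm ≤ αp)
    (hratio : αp / αm ≤ αp' / αm') (hle : αm ≤ αm')
    (heq : (Finset.univ : Finset (Finset (Fin n))).sup' Finset.univ_nonempty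
      (fun I => αm * ∑ i ∈ I, ℓ i + αp * ∑ i ∈ Iᶜ, ℓ i) = s) :
    (Finset.univ : Finset (Finset (Fin n))).sup' Finset.univ_nonempty
      (fun I => αm' * ∑ i ∈ I, ℓ i + αp' * ∑ i ∈ Iᶜ, ℓ i) ≥ s := by
  simp only [mul_sum, sup'_sum_add_sum_compl_eq_sum_max] at heq ⊢
  have hcross : αm' * αp ≤ αm * αp' := by
    rw [div_le_div_iff₀ h1 (h1.trans_le hle)] at hratio
    linarith
  refine le_of_mul_le_mul_left ?_ h1
  calc αm * s ≤ αm' * s := mul_le_mul_of_nonneg_right hle hs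
    _ = ∑ i, αm' * max (αm * ℓ i) (αp * ℓ i) := by rw [← heq, mul_sum]
    _ ≤ ∑ i, αm * max (αm' * ℓ i) (αp' * ℓ i) :=
      sum_le_sum fun i _ => mul_max_le_mul_max_of_mul_le_mul h1 h2 hcross
    _ = αm * ∑ i, max (αm' * ℓ i) (αp' * ℓ i) := by rw [mul_sum]

/-- the pointwise Hamiltonian inequality under the ratio condition
`α₊/α₋ ≤ α'₊/α'₋` and `α₋ ≤ α'₋` (Remark 3.1). -/
theorem hamiltonian_ratio_comparison
    (n : ℕ) (ℓ : Fin n → ℝ) (s : ℝ) (hs : 0 ≤ s)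
    (αm αp αm' αp' : ℝ)
    (h1 : 0 < αm) (h2 : αm ≤ αp) (h1' : 0 < αm') (h2' : αm' ≤ αp')
    (hratio : αp / αm ≤ αp' / αm') (hle : αm ≤ αm')
    (heq : (Finset.univ : Finset (Finset (Fin n))).sup' Finset.univ_nonempty
      (fun I => αm * ∑ i ∈ I, ℓ i + αp * ∑ i ∈ Iᶜ, ℓ i) = s) :
    (Finset.univ : Finset (Finset (Fin n))).sup' Finset.univ_nonempty
      (fun I => αm' * ∑ i ∈ I, ℓ i + αp' * ∑ i ∈ Iᶜ, ℓ i) ≥ s :=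
  hamiltonian_ratio_comparison_general n ℓ s hs αm αp αm' αp' h1 h2 hratio hle heq
end

section
/- The number p_sta := max over all subsets I ⊆ {1,…,n} of [α₋ Σ_{i∈I} e_i + α₊ Σ_{i∈Iᶜ} e_i − sT] / (|I| α₋ + |Iᶜ| α₊) is the unique real number p satisfying Σ_{i=1}^n max(α₋(e_i − p), α₊(e_i − p)) = sT. -/
/-- the static equilibrium price `p_sta` is the unique root of the
aggregate excess-demand equation `Σ_i max(α₋(e_i − p), α₊(e_i − p)) = sT`. -/
theorem static_price_unique_root
    (n : ℕ) (hn : 1 ≤ n) (e : Fin n → ℝ) (T : ℝ) (hT : 0 < T)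
    (s : ℝ) (hs : 0 ≤ s) (αm αp : ℝ) (hαm : 0 < αm) (hα : αm ≤ αp)
    (psta : ℝ)
    (hpsta : psta = (Finset.univ : Finset (Finset (Fin n))).sup' Finset.univ_nonempty
      (fun I => (αm * ∑ i ∈ I, e i + αp * ∑ i ∈ Iᶜ, e i - s * T) /
        (I.card * αm + (Iᶜ).card * αp))) :
    (∑ i, max (αm * (e i - psta)) (αp * (e i - psta)) = s * T) ∧
    (∀ p : ℝ, (∑ i, max (αm * (e i - p)) (αp * (e i - p)) = s * T) → p = psta) := by
  classical
  have hαp : 0 < αp := lt_of_lt_of_le hαm hα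
  set D : Finset (Fin n) → ℝ := fun I => (I.card : ℝ) * αm + ((Iᶜ).card : ℝ) * αp with hDdef
  set q : Finset (Fin n) → ℝ := fun I =>
    (αm * ∑ i ∈ I, e i + αp * ∑ i ∈ Iᶜ, e i - s * T) / (I.card * αm + (Iᶜ).card * αp)
    with hqdef
  have hD : ∀ I : Finset (Fin n), 0 < D I := by
    intro I
    have hcard : I.card + (Iᶜ).card = n := by simpa using Finset.card_add_card_compl I
    rcases Nat.eq_zero_or_pos I.card with h0 | hpos
    · have hc : (Iᶜ).card = n := by omega
      have h1 : (1:ℝ) ≤ ((Iᶜ).card : ℝ) := by rw [hc]; exact_mod_cast hn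
      have h2 : (0:ℝ) ≤ (I.card : ℝ) * αm :=
        mul_nonneg (Nat.cast_nonneg _) hαm.le
      simp only [hDdef]
      nlinarith
    · have h1 : (1:ℝ) ≤ (I.card : ℝ) := by exact_mod_cast hpos
      have h2 : (0:ℝ) ≤ ((Iᶜ).card : ℝ) * αp :=
        mul_nonneg (Nat.cast_nonneg _) hαp.le
      simp only [hDdef]
      nlinarith
  set g : Finset (Fin n) → ℝ → ℝ := fun I p =>
    (∑ i ∈ I, αm * (e i - p)) + ∑ i ∈ Iᶜ, αp * (e i - p) with hgdef
  have hg_eq : ∀ I p, g I p = (αm * ∑ i ∈ I, e i + αp * ∑ i ∈ Iᶜ, e i) - D I * p := by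
    intro I p
    simp only [hgdef, hDdef, ← Finset.mul_sum, Finset.sum_sub_distrib, Finset.sum_const,
      nsmul_eq_mul]
    ring
  have hq_eq : ∀ I, q I = (αm * ∑ i ∈ I, e i + αp * ∑ i ∈ Iᶜ, e i - s * T) / D I := by
    intro I; rfl
  have hg_root : ∀ I p, p = q I → g I p = s * T := by
    intro I p hp
    rw [hg_eq, hp, hq_eq, mul_div_cancel₀ _ (hD I).ne']
    ring
  have hg_le : ∀ I p, g I p ≤ s * T ↔ q I ≤ p := by
    intro I p
    rw [hg_eq, hq_eq, div_le_iff₀ (hD I)]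
    constructor <;> intro h <;> nlinarith
  have hg_ge : ∀ I p, s * T ≤ g I p ↔ p ≤ q I := by
    intro I p
    rw [hg_eq, hq_eq, le_div_iff₀ (hD I)]
    constructor <;> intro h <;> nlinarith
  have hf_ge : ∀ (I : Finset (Fin n)) p,
      g I p ≤ ∑ i, max (αm * (e i - p)) (αp * (e i - p)) := by
    intro I p
    rw [hgdef, ← Finset.sum_add_sum_compl I (fun i => max (αm * (e i - p)) (αp * (e i - p)))]
    exact add_le_add
      (Finset.sum_le_sum fun i _ => le_max_left _ _)
      (Finset.sum_le_sum fun i _ => le_max_right _ _)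
  have hf_eq : ∀ p, (∑ i, max (αm * (e i - p)) (αp * (e i - p)))
      = g (Finset.univ.filter fun i => e i ≤ p) p := by
    intro p
    rw [hgdef, ← Finset.sum_add_sum_compl (Finset.univ.filter fun i => e i ≤ p)
      (fun i => max (αm * (e i - p)) (αp * (e i - p)))]
    congr 1
    · apply Finset.sum_congr rfl
      intro i hi
      have h1 : e i ≤ p := (Finset.mem_filter.mp hi).2
      exact max_eq_left (by nlinarith)
    · apply Finset.sum_congr rfl
      intro i hi
      have h1 : p ≤ e i := by
        have := Finset.mem_compl.mp hi
        simp only [Finset.mem_filter, Finset.mem_univ, true_and, not_le] at this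
        exact this.le
      exact max_eq_right (by nlinarith)
  obtain ⟨Istar, -, hIstar⟩ :=
    Finset.exists_mem_eq_sup' (Finset.univ_nonempty (α := Finset (Fin n))) q
  have hpstar : psta = q Istar := by rw [hpsta]; exact hIstar
  have hle : ∀ I, q I ≤ psta := by
    intro I; rw [hpsta]; exact Finset.le_sup' q (Finset.mem_univ I)
  constructor
  · apply le_antisymm
    · rw [hf_eq]
      exact (hg_le _ _).mpr (hle _)
    · calc s * T = g Istar psta := (hg_root Istar psta hpstar).symm
        _ ≤ _ := hf_ge Istar psta
  · intro p hp
    have h1 : p ≤ psta := by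
      rw [hf_eq] at hp
      have : q (Finset.univ.filter fun i => e i ≤ p) ≤ p := (hg_le _ _).mp hp.le
      have : p ≤ q (Finset.univ.filter fun i => e i ≤ p) := (hg_ge _ _).mp hp.ge
      exact this.trans (hle _)
    have h2 : psta ≤ p := by
      have hg1 : g Istar p ≤ s * T := hp ▸ hf_ge Istar p
      have := (hg_le _ _).mp hg1
      rw [← hpstar] at this
      exact this
    exact le_antisymm h1 h2
end

section
/- Fix n ≥ 1, reals e₁,…,eₙ, T > 0, s ≥ 0, and α₋ > 0. For α₊ ≥ α₋ let p_sta(α₋, α₊) := max over all subsets I ⊆ {1,…,n} of [α₋ Σ_{i∈I} e_i + α₊ Σ_{i∈Iᶜ} e_i − sT] / (|I| α₋ + |Iᶜ| α₊). Then p_sta(α₋, α₊) converges to max_{1 ≤ i ≤ n} e_i as α₊ → ∞. -/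
open Filter Finset

/-- as the cost of long positions vanishes (`α₊ → ∞`), the static
equilibrium price converges to the largest expected payoff `max_i e_i`. -/
theorem static_price_limit_long
    (n : ℕ) (hn : 0 < n) (e : Fin n → ℝ) (T : ℝ) (hT : 0 < T)
    (s : ℝ) (hs : 0 ≤ s) (αm : ℝ) (hαm : 0 < αm) :
    Filter.Tendsto
      (fun αp : ℝ => (Finset.univ : Finset (Finset (Fin n))).sup' Finset.univ_nonempty
        (fun I => (αm * ∑ i ∈ I, e i + αp * ∑ i ∈ Iᶜ, e i - s * T) /
          (I.card * αm + (Iᶜ).card * αp)))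
      Filter.atTop
      (nhds ((Finset.univ : Finset (Fin n)).sup' ⟨⟨0, hn⟩, Finset.mem_univ _⟩ e)) := by
  set ℓ : Finset (Fin n) → ℝ := fun I =>
    if I = Finset.univ then (αm * ∑ i, e i - s * T) / (n * αm)
    else (∑ i ∈ Iᶜ, e i) / (Iᶜ.card)
  have key : Filter.Tendsto
      (fun αp : ℝ => (Finset.univ : Finset (Finset (Fin n))).sup' Finset.univ_nonempty
        (fun I => (αm * ∑ i ∈ I, e i + αp * ∑ i ∈ Iᶜ, e i - s * T) /
          (I.card * αm + (Iᶜ).card * αp)))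
      Filter.atTop (nhds ((Finset.univ : Finset (Finset (Fin n))).sup' Finset.univ_nonempty ℓ)) := by
    apply Filter.Tendsto.finset_sup'_nhds_apply
    intro I _
    by_cases hI : I = Finset.univ
    · subst hI
      simp only [ℓ, if_pos rfl, compl_univ, Finset.sum_empty, Finset.card_empty,
        Finset.card_univ, Fintype.card_fin]
      simpa using tendsto_const_nhds
    · have hc : (0:ℝ) < (Iᶜ.card : ℝ) := by
        exact_mod_cast Finset.card_pos.2 (by
          obtain ⟨i, -, hi⟩ := Finset.exists_of_ssubset
            (Finset.ssubset_iff_subset_ne.2 ⟨Finset.subset_univ I, hI⟩)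
          exact ⟨i, Finset.mem_compl.2 hi⟩)
      simp only [ℓ, if_neg hI]
      have h1 : Filter.Tendsto (fun αp : ℝ =>
          ((αm * ∑ i ∈ I, e i - s * T) / αp + ∑ i ∈ Iᶜ, e i) /
          ((I.card : ℝ) * αm / αp + Iᶜ.card)) Filter.atTop
          (nhds ((∑ i ∈ Iᶜ, e i) / (Iᶜ.card))) := by
        have h2 : Filter.Tendsto (fun x : ℝ => (αm * ∑ i ∈ I, e i - s * T) / x)
          Filter.atTop (nhds 0) := tendsto_const_nhds.div_atTop tendsto_id
        have h3 : Filter.Tendsto (fun x : ℝ => (I.card : ℝ) * αm / x)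
          Filter.atTop (nhds 0) := tendsto_const_nhds.div_atTop tendsto_id
        have hmain : Filter.Tendsto (fun x : ℝ =>
            ((αm * ∑ i ∈ I, e i - s * T) / x + ∑ i ∈ Iᶜ, e i) /
            ((I.card : ℝ) * αm / x + Iᶜ.card)) Filter.atTop
            (nhds ((0 + ∑ i ∈ Iᶜ, e i) / (0 + (Iᶜ.card : ℝ)))) :=
          (h2.add tendsto_const_nhds).div (h3.add tendsto_const_nhds)
            (by rw [zero_add]; exact hc.ne')
        simpa using hmain
      refine h1.congr' ?_
      filter_upwards [Filter.eventually_gt_atTop 0] with x hx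
      field_simp
      ring
  convert key using 2
  -- show sup' e = sup' ℓ
  apply le_antisymm
  · obtain ⟨i₀, -, hi₀⟩ := Finset.exists_mem_eq_sup' (⟨⟨0, hn⟩, Finset.mem_univ _⟩ :
      (Finset.univ : Finset (Fin n)).Nonempty) e
    rw [hi₀]
    have : ℓ ({i₀}ᶜ) = e i₀ := by
      have hne : ({i₀}ᶜ : Finset (Fin n)) ≠ Finset.univ := by
        intro h
        have : i₀ ∈ ({i₀}ᶜ : Finset (Fin n)) := h ▸ Finset.mem_univ i₀
        simp at this
      simp [ℓ, hne]
    calc e i₀ = ℓ ({i₀}ᶜ) := this.symm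
      _ ≤ _ := Finset.le_sup' ℓ (Finset.mem_univ _)
  · apply Finset.sup'_le
    intro I _
    have hmax : ∀ i : Fin n, e i ≤ Finset.univ.sup' ⟨⟨0, hn⟩, Finset.mem_univ _⟩ e :=
      fun i => Finset.le_sup' e (Finset.mem_univ i)
    by_cases hI : I = Finset.univ
    · subst hI
      simp only [ℓ, if_pos rfl]
      rw [div_le_iff₀ (by positivity)]
      have : ∑ i, e i ≤ n * Finset.univ.sup' ⟨⟨0, hn⟩, Finset.mem_univ _⟩ e := by
        calc ∑ i, e i ≤ ∑ _i : Fin n, Finset.univ.sup' ⟨⟨0, hn⟩, Finset.mem_univ _⟩ e :=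
              Finset.sum_le_sum fun i _ => hmax i
          _ = n * _ := by simp [Finset.sum_const, Finset.card_univ]
      nlinarith [mul_nonneg hs hT.le]
    · have hc : (0:ℝ) < (Iᶜ.card : ℝ) := by
        exact_mod_cast Finset.card_pos.2 (by
          obtain ⟨i, -, hi⟩ := Finset.exists_of_ssubset
            (Finset.ssubset_iff_subset_ne.2 ⟨Finset.subset_univ I, hI⟩)
          exact ⟨i, Finset.mem_compl.2 hi⟩)
      simp only [ℓ, if_neg hI]
      rw [div_le_iff₀ hc]
      calc ∑ i ∈ Iᶜ, e i ≤ ∑ _i ∈ Iᶜ, Finset.univ.sup' ⟨⟨0, hn⟩, Finset.mem_univ _⟩ e :=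
            Finset.sum_le_sum fun i _ => hmax i
        _ = _ := by rw [Finset.sum_const, nsmul_eq_mul, mul_comm]
end

section
/- Fix n ≥ 1, reals e₁,…,eₙ, T > 0, s ≥ 0, and α₊ > 0. For 0 < α₋ ≤ α₊ let p_sta(α₋, α₊) := max over all subsets I ⊆ {1,…,n} of [α₋ Σ_{i∈I} e_i + α₊ Σ_{i∈Iᶜ} e_i − sT] / (|I| α₋ + |Iᶜ| α₊). Then, as α₋ → 0 from the right, p_sta(α₋, α₊) converges to max over all nonempty subsets J ⊆ {1,…,n} of [ (1/|J|) Σ_{i∈J} e_i − sT/(|J| α₊) ]. -/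
open Filter Topology

private lemma tendsto_finset_sup'_aux {ι : Type*} (s : Finset ι) (hs : s.Nonempty)
    (f : ι → ℝ → ℝ) (l : Filter ℝ) (g : ι → ℝ)
    (h : ∀ i ∈ s, Tendsto (f i) l (nhds (g i))) :
    Tendsto (fun x => s.sup' hs (fun i => f i x)) l (nhds (s.sup' hs g)) := by
  revert h
  induction hs using Finset.Nonempty.cons_induction with
  | singleton i =>
      intro h
      simp only [Finset.sup'_singleton]
      exact h i (Finset.mem_singleton_self i)
  | cons i t hit ht ih =>
      intro h
      simp only [Finset.sup'_cons (H := ht)]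
      exact (h i (Finset.mem_cons_self i t)).max
        (ih (fun j hj => h j (Finset.mem_cons.mpr (Or.inr hj))))

/-- as the cost of short positions explodes (`α₋ → 0⁺`), the static
equilibrium price converges to the no-short-selling price
`max_{∅ ≠ J} [(1/|J|) Σ_{i∈J} e_i − sT/(|J|α₊)]`. -/
theorem static_price_limit_short
    (n : ℕ) (hn : 0 < n) (e : Fin n → ℝ) (T : ℝ) (hT : 0 < T)
    (s : ℝ) (hs : 0 ≤ s) (αp : ℝ) (hαp : 0 < αp) :
    Filter.Tendsto
      (fun αm : ℝ => (Finset.univ : Finset (Finset (Fin n))).sup' Finset.univ_nonempty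
        (fun I => (αm * ∑ i ∈ I, e i + αp * ∑ i ∈ Iᶜ, e i - s * T) /
          (I.card * αm + (Iᶜ).card * αp)))
      (nhdsWithin 0 (Set.Ioi 0))
      (nhds (((Finset.univ : Finset (Finset (Fin n))).filter (fun J => J.Nonempty)).sup'
        ⟨{⟨0, hn⟩}, Finset.mem_filter.mpr ⟨Finset.mem_univ _, Finset.singleton_nonempty _⟩⟩
        (fun J => (∑ i ∈ J, e i) / J.card - s * T / (J.card * αp)))) := by
  classical
  haveI : Nonempty (Fin n) := ⟨⟨0, hn⟩⟩
  set F : Finset (Fin n) → ℝ → ℝ := fun I αm =>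
    (αm * ∑ i ∈ I, e i + αp * ∑ i ∈ Iᶜ, e i - s * T) /
      (I.card * αm + (Iᶜ).card * αp) with hF
  set g : Finset (Fin n) → ℝ := fun J =>
    (∑ i ∈ J, e i) / J.card - s * T / (J.card * αp) with hg
  set A : Finset (Finset (Fin n)) :=
    Finset.univ.filter (fun I => I ≠ Finset.univ) with hA
  have huniv : (Finset.univ : Finset (Fin n)).Nonempty := Finset.univ_nonempty
  have hAne : A.Nonempty := by
    refine ⟨∅, ?_⟩
    simp only [hA, Finset.mem_filter, Finset.mem_univ, true_and]
    exact fun h => huniv.ne_empty h.symm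
  set B : Finset (Finset (Fin n)) :=
    Finset.univ.filter (fun J => J.Nonempty) with hB
  have hBne : B.Nonempty :=
    ⟨{⟨0, hn⟩}, Finset.mem_filter.mpr ⟨Finset.mem_univ _, Finset.singleton_nonempty _⟩⟩
  set L : ℝ := B.sup' hBne g with hL
  -- image of A under compl is B
  have himg : A.image compl = B := by
    ext J
    simp only [hA, hB, Finset.mem_image, Finset.mem_filter, Finset.mem_univ, true_and]
    constructor
    · rintro ⟨I, hI, rfl⟩
      rw [Finset.nonempty_iff_ne_empty, Ne, Finset.compl_eq_empty_iff]
      exact hI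
    · intro hJ
      refine ⟨Jᶜ, ?_, compl_compl J⟩
      rw [Ne, Finset.compl_eq_univ_iff, ← Ne, ← Finset.nonempty_iff_ne_empty]
      exact hJ
  -- each F I for I ≠ univ tends to g Iᶜ
  have hFI : ∀ I ∈ A, Tendsto (F I) (nhdsWithin 0 (Set.Ioi 0)) (nhds (g Iᶜ)) := by
    intro I hI
    have hIne : I ≠ Finset.univ := by
      simpa [hA] using hI
    have hc : 0 < ((Iᶜ).card : ℝ) := by
      have : Iᶜ.Nonempty := by
        rw [Finset.nonempty_iff_ne_empty, Ne, Finset.compl_eq_empty_iff]; exact hIne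
      exact_mod_cast Finset.card_pos.mpr this
    have hden : ((I.card : ℝ) * 0 + (Iᶜ).card * αp) ≠ 0 := by
      simp only [mul_zero, zero_add]
      exact ne_of_gt (by positivity)
    have hcont : ContinuousAt (F I) 0 := by
      apply ContinuousAt.div
      · fun_prop
      · fun_prop
      · exact hden
    have h0 : F I 0 = g Iᶜ := by
      simp only [hF, hg, mul_zero, zero_add, zero_mul]
      rw [eq_sub_iff_add_eq]
      field_simp
      ring
    have := hcont.tendsto.mono_left (nhdsWithin_le_nhds (s := Set.Ioi (0:ℝ)))
    rwa [h0] at this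
  -- the sup over A tends to L
  have hAlim : A.sup' hAne (fun I => g Iᶜ) = L := by
    have hc := Finset.sup'_congr (H := hBne) himg.symm (fun (a : Finset (Fin n)) _ => rfl (a := g a))
    rw [hL, hc, Finset.sup'_image]
    rfl
  have hS : Tendsto (fun αm => A.sup' hAne (fun I => F I αm))
      (nhdsWithin 0 (Set.Ioi 0)) (nhds L) := by
    rw [← hAlim]
    exact tendsto_finset_sup'_aux A hAne F _ _ hFI
  -- decompose the full sup
  have hdecomp : ∀ αm : ℝ,
      (Finset.univ : Finset (Finset (Fin n))).sup' Finset.univ_nonempty (fun I => F I αm)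
        = F Finset.univ αm ⊔ A.sup' hAne (fun I => F I αm) := by
    intro αm
    have hins : (Finset.univ : Finset (Finset (Fin n))) = insert Finset.univ A := by
      ext I
      simp [hA, or_iff_not_imp_left]
    rw [Finset.sup'_congr (H := Finset.univ_nonempty) hins (fun _ _ => rfl), Finset.sup'_insert (H := hAne)]
  -- eventual upper bound for the univ term
  have hunivB : (Finset.univ : Finset (Fin n)) ∈ B := by
    simp only [hB, Finset.mem_filter, Finset.mem_univ, true_and]
    exact huniv
  have hgL : g Finset.univ ≤ L := Finset.le_sup' g hunivB
  have hn0 : 0 < (((Finset.univ : Finset (Fin n)).card : ℝ)) := by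
    exact_mod_cast Finset.card_pos.mpr huniv
  have hevub : ∀ᶠ αm in nhdsWithin (0:ℝ) (Set.Ioi 0), F Finset.univ αm ≤ L := by
    filter_upwards [Ioc_mem_nhdsGT hαp] with αm hαm
    refine le_trans ?_ hgL
    have hαm0 : 0 < αm := hαm.1
    have hcompl : ((Finset.univ : Finset (Fin n))ᶜ) = (∅ : Finset (Fin n)) := by simp
    have heq : F Finset.univ αm = (∑ i ∈ (Finset.univ : Finset (Fin n)), e i) /
        (Finset.univ : Finset (Fin n)).card
        - s * T / ((Finset.univ : Finset (Fin n)).card * αm) := by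
      simp only [hF, hcompl, Finset.sum_empty, mul_zero, add_zero, Finset.card_empty,
        Nat.cast_zero, zero_mul]
      rw [eq_sub_iff_add_eq]
      field_simp
      ring
    rw [heq, hg]
    have : s * T / ((Finset.univ : Finset (Fin n)).card * αp)
        ≤ s * T / ((Finset.univ : Finset (Fin n)).card * αm) := by
      refine div_le_div_of_nonneg_left (mul_nonneg hs hT.le) (by positivity) ?_
      exact mul_le_mul_of_nonneg_left hαm.2 hn0.le
    linarith
  -- squeeze
  have hmainlim : Tendsto (fun αm => F Finset.univ αm ⊔ A.sup' hAne (fun I => F I αm))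
      (nhdsWithin 0 (Set.Ioi 0)) (nhds L) := by
    have hupper : Tendsto (fun αm => L ⊔ A.sup' hAne (fun I => F I αm))
        (nhdsWithin 0 (Set.Ioi 0)) (nhds L) := by
      simpa using ((tendsto_const_nhds : Tendsto (fun _ : ℝ => L)
        (nhdsWithin 0 (Set.Ioi 0)) (nhds L)).max hS)
    refine tendsto_of_tendsto_of_tendsto_of_le_of_le' hS hupper ?_ ?_
    · exact Filter.Eventually.of_forall fun αm => le_max_right _ _
    · filter_upwards [hevub] with αm hαm
      exact max_le_max hαm le_rfl
  exact hmainlim.congr' (Filter.Eventually.of_forall fun αm => (hdecomp αm).symm)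
end

section
/- Fix n ≥ 1, reals e₁,…,eₙ, T > 0, and s ≥ 0. If 0 < α'₋ ≤ α₋ ≤ α₊ ≤ α'₊, then p_sta(α₋, α₊) ≤ p_sta(α'₋, α'₊), where p_sta(α₋, α₊) := max over all subsets I ⊆ {1,…,n} of [α₋ Σ_{i∈I} e_i + α₊ Σ_{i∈Iᶜ} e_i − sT] / (|I| α₋ + |Iᶜ| α₊). In particular, the static equilibrium price is increasing in α₊ and decreasing in α₋. -/
/-!
Each `p_I` is a weighted price: the solution `p` of `∑ cᵢ (eᵢ - p) = s T` for the weights `cᵢ`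
equal to `α₋` on `I` and `α₊` off it. Hence `p ≤ p_J` as soon as the weighted deviations for `J`
sum to at least `s T` at `p`. Given `p = p_I` at costs `(α₋, α₊)`, take `J = {i | eᵢ < p}` at
costs `(α'₋, α'₊)`: agents below `p` get the smallest weight `α'₋` and agents above `p` the largest
weight `α'₊`, so every deviation `cᵢ (eᵢ - p)` only grows.
-/

open Finset

section WeightedPrice

variable {ι : Type*} [Fintype ι]

noncomputable def weightedPrice (c e : ι → ℝ) (k : ℝ) : ℝ :=
  (∑ i, c i * e i - k) / ∑ i, c i

variable {c c' e : ι → ℝ} {k : ℝ}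

theorem le_weightedPrice_iff (hc : 0 < ∑ i, c i) (p : ℝ) :
    p ≤ weightedPrice c e k ↔ k ≤ ∑ i, c i * (e i - p) := by
  simp only [weightedPrice, le_div_iff₀ hc, mul_sub, sum_sub_distrib, ← sum_mul]
  constructor <;> intro h <;> linarith

theorem sum_mul_sub_weightedPrice (hc : 0 < ∑ i, c i) :
    ∑ i, c i * (e i - weightedPrice c e k) = k := by
  simp only [weightedPrice, mul_sub, sum_sub_distrib, ← sum_mul, mul_div_cancel₀ _ hc.ne']
  ring

theorem weightedPrice_le_weightedPrice (hc : 0 < ∑ i, c i) (hc' : 0 < ∑ i, c' i)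
    (h : ∀ i, c i * (e i - weightedPrice c e k) ≤ c' i * (e i - weightedPrice c e k)) :
    weightedPrice c e k ≤ weightedPrice c' e k := by
  rw [le_weightedPrice_iff hc']
  calc k = ∑ i, c i * (e i - weightedPrice c e k) := (sum_mul_sub_weightedPrice hc).symm
    _ ≤ _ := sum_le_sum fun i _ => h i

end WeightedPrice

section CarryCost

variable {ι : Type*} [Fintype ι] [DecidableEq ι]

/-- The agents of `I` carry short positions at cost `a`, the others long positions at cost `b`. -/
def carryCost (a b : ℝ) (I : Finset ι) (i : ι) : ℝ :=
  if i ∈ I then a else b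

theorem sum_carryCost_mul (a b : ℝ) (I : Finset ι) (f : ι → ℝ) :
    ∑ i, carryCost a b I i * f i = a * ∑ i ∈ I, f i + b * ∑ i ∈ Iᶜ, f i := by
  simp only [carryCost, ite_mul, sum_ite, filter_mem_eq_inter, filter_notMem_eq_sdiff, univ_inter,
    ← compl_eq_univ_sdiff, mul_sum]

theorem div_eq_weightedPrice_carryCost (a b k : ℝ) (I : Finset ι) (e : ι → ℝ) :
    (a * ∑ i ∈ I, e i + b * ∑ i ∈ Iᶜ, e i - k) / (I.card * a + (Iᶜ).card * b) =
      weightedPrice (carryCost a b I) e k := by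
  have hden : I.card * a + (Iᶜ).card * b = ∑ i, carryCost a b I i := by
    simpa [mul_comm] using (sum_carryCost_mul a b I 1).symm
  rw [weightedPrice, sum_carryCost_mul, hden]

theorem sum_carryCost_pos [Nonempty ι] {a b : ℝ} (ha : 0 < a) (hb : 0 < b) (I : Finset ι) :
    0 < ∑ i, carryCost a b I i :=
  sum_pos (fun i _ => by unfold carryCost; split_ifs <;> assumption) univ_nonempty

theorem carryCost_mul_sub_le {a b a' b' : ℝ} (ha : a' ≤ a) (hab : a ≤ b) (hb : b ≤ b')
    (I : Finset ι) (e : ι → ℝ) (p : ℝ) (i : ι) :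
    carryCost a b I i * (e i - p) ≤ carryCost a' b' {j | e j < p} i * (e i - p) := by
  have hlo : a' ≤ carryCost a b I i := by unfold carryCost; split_ifs <;> linarith
  have hhi : carryCost a b I i ≤ b' := by unfold carryCost; split_ifs <;> linarith
  by_cases hi : e i < p
  · have hJ : carryCost a' b' {j | e j < p} i = a' := if_pos (by simpa using hi)
    rw [hJ]
    exact mul_le_mul_of_nonpos_right hlo (by linarith)
  · have hJ : carryCost a' b' {j | e j < p} i = b' := if_neg (by simpa using hi)
    rw [hJ]
    exact mul_le_mul_of_nonneg_right hhi (by linarith)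

end CarryCost

theorem static_price_monotone_in_costs_general
    (n : ℕ) (hn : 1 ≤ n) (e : Fin n → ℝ) (T : ℝ)
    (s : ℝ)
    (psta : ℝ → ℝ → ℝ)
    (hpsta : ∀ a b : ℝ, psta a b =
      (Finset.univ : Finset (Finset (Fin n))).sup' Finset.univ_nonempty
        (fun I => (a * ∑ i ∈ I, e i + b * ∑ i ∈ Iᶜ, e i - s * T) /
          (I.card * a + (Iᶜ).card * b)))
    (αm' αm αp αp' : ℝ)
    (h1 : 0 < αm') (h2 : αm' ≤ αm) (h3 : αm ≤ αp) (h4 : αp ≤ αp') :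
    psta αm αp ≤ psta αm' αp' := by
  have : Nonempty (Fin n) := ⟨⟨0, hn⟩⟩
  have hαm : 0 < αm := h1.trans_le h2
  have hαp : 0 < αp := hαm.trans_le h3
  simp only [hpsta, div_eq_weightedPrice_carryCost]
  refine sup'_le _ _ fun I _ => ?_
  set p := weightedPrice (carryCost αm αp I) e (s * T)
  calc p ≤ weightedPrice (carryCost αm' αp' {j | e j < p}) e (s * T) :=
        weightedPrice_le_weightedPrice (sum_carryCost_pos hαm hαp I)
          (sum_carryCost_pos h1 (hαp.trans_le h4) _)
          (carryCost_mul_sub_le h2 h3 h4 I e p)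
    _ ≤ _ := le_sup' (fun J => weightedPrice (carryCost αm' αp' J) e (s * T)) (mem_univ _)

/-- the static equilibrium price is increasing in `α₊` and
decreasing in `α₋`. -/
theorem static_price_monotone_in_costs
    (n : ℕ) (hn : 1 ≤ n) (e : Fin n → ℝ) (T : ℝ) (hT : 0 < T)
    (s : ℝ) (hs : 0 ≤ s)
    (psta : ℝ → ℝ → ℝ)
    (hpsta : ∀ a b : ℝ, psta a b =
      (Finset.univ : Finset (Finset (Fin n))).sup' Finset.univ_nonempty
        (fun I => (a * ∑ i ∈ I, e i + b * ∑ i ∈ Iᶜ, e i - s * T) /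
          (I.card * a + (Iᶜ).card * b)))
    (αm' αm αp αp' : ℝ)
    (h1 : 0 < αm') (h2 : αm' ≤ αm) (h3 : αm ≤ αp) (h4 : αp ≤ αp') :
    psta αm αp ≤ psta αm' αp' :=
  static_price_monotone_in_costs_general n hn e T s psta hpsta αm' αm αp αp' h1 h2 h3 h4
end

section
/- Let T > 0, s > 0, 0 ≤ t ≤ T, and x ∈ ℝ. Consider Lebesgue-measurable controls u : [t, T] → {−1, 0, 1} and define the payoff J(u) := (x + ∫ₜᵀ u(r) dr)² − ∫ₜᵀ κ(u(r)) dr, where κ(0) = s/2 and κ(−1) = κ(1) = s. Then the supremum of J(u) over all such controls equals v(t,x) := x² − s(T−t)/2 if |x| + (T−t)/2 ≤ s/4, and v(t,x) := (|x| + (T−t))² − s(T−t) if |x| + (T−t)/2 > s/4. -/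
/-!
Write `τ = T - t` and `q = ∫ₜᵀ |u|` for the time spent moving. Since `u ∈ {-1, 0, 1}`, the cost
is `s τ / 2 + s q / 2` and `|∫ₜᵀ u| ≤ q ≤ τ`, so `J(u) ≤ (|x| + q)² - s q / 2 - s τ / 2`. This
bound is convex in `q`, hence at most its value at `q = 0` or `q = τ`, which are the payoffs of
the constant controls `0` and `sign x`. Comparing the two values gives the threshold
`|x| + τ / 2 ≤ s / 4`.
-/

open intervalIntegral MeasureTheory Set

lemma add_sq_sub_mul_le_max {a c q τ : ℝ} (hq : 0 ≤ q) (hqτ : q ≤ τ) :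
    (a + q) ^ 2 - c * q ≤ max (a ^ 2) ((a + τ) ^ 2 - c * τ) := by
  by_cases h : 2 * a + q ≤ c
  · exact le_max_of_le_left (by nlinarith)
  · exact le_max_of_le_right (by nlinarith)

lemma max_sq_sub_eq_ite {a s τ : ℝ} (hτ : 0 ≤ τ) :
    max (a ^ 2 - s * τ / 2) ((a + τ) ^ 2 - s * τ)
      = if a + τ / 2 ≤ s / 4 then a ^ 2 - s * τ / 2 else (a + τ) ^ 2 - s * τ := by
  -- the difference of the two values is `τ (2a + τ - s/2)`
  split_ifs with h
  · exact max_eq_left (by nlinarith)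
  · exact max_eq_right (by nlinarith)

lemma intervalIntegrable_of_norm_le {E : Type*} [NormedAddCommGroup E] {f : ℝ → E} {a b C : ℝ}
    (hf : AEStronglyMeasurable f) (h : ∀ r ∈ uIcc a b, ‖f r‖ ≤ C) :
    IntervalIntegrable f volume a b :=
  (intervalIntegrable_const (c := C)).mono_fun' hf.restrict
    (ae_restrict_of_forall_mem measurableSet_uIoc fun r hr => h r (uIoc_subset_uIcc hr))

section TernaryControl

variable {t T : ℝ} {u : ℝ → ℝ}

lemma intervalIntegrable_of_ternary (hu : Measurable u)
    (hval : ∀ r ∈ uIcc t T, u r = -1 ∨ u r = 0 ∨ u r = 1) :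
    IntervalIntegrable u volume t T :=
  intervalIntegrable_of_norm_le (C := 1) hu.aestronglyMeasurable fun r hr => by
    rcases hval r hr with h | h | h <;> simp [h]

lemma integral_abs_le_length_of_ternary (htT : t ≤ T) (hu : Measurable u)
    (hval : ∀ r ∈ uIcc t T, u r = -1 ∨ u r = 0 ∨ u r = 1) :
    ∫ r in t..T, |u r| ≤ T - t := by
  have hle : ∫ r in t..T, |u r| ≤ ∫ _ in t..T, (1 : ℝ) :=
    integral_mono_on htT (intervalIntegrable_of_ternary hu hval).abs intervalIntegrable_const
      fun r hr => by
        rcases hval r (Icc_subset_uIcc hr) with h | h | h <;> simp [h]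
  simpa using hle

lemma integral_cost_of_ternary (hu : Measurable u)
    (hval : ∀ r ∈ uIcc t T, u r = -1 ∨ u r = 0 ∨ u r = 1) (s : ℝ) :
    ∫ r in t..T, (if u r = 0 then s / 2 else s) = s / 2 * (T - t) + s / 2 * ∫ r in t..T, |u r| := by
  have hcost : ∀ r ∈ uIcc t T, (if u r = 0 then s / 2 else s) = s / 2 + s / 2 * |u r| := by
    intro r hr
    rcases hval r hr with h | h | h <;> norm_num [h]
  rw [integral_congr hcost, integral_add intervalIntegrable_const
    ((intervalIntegrable_of_ternary hu hval).abs.const_mul _), intervalIntegral.integral_const_mul,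
    intervalIntegral.integral_const, smul_eq_mul, mul_comm]

lemma payoff_le_max_of_ternary (htT : t ≤ T) (hu : Measurable u)
    (hval : ∀ r ∈ uIcc t T, u r = -1 ∨ u r = 0 ∨ u r = 1) (s x : ℝ) :
    (x + ∫ r in t..T, u r) ^ 2 - ∫ r in t..T, (if u r = 0 then s / 2 else s)
      ≤ max (x ^ 2 - s * (T - t) / 2) ((|x| + (T - t)) ^ 2 - s * (T - t)) := by
  set q := ∫ r in t..T, |u r|
  have hq : 0 ≤ q := integral_nonneg htT fun r _ => abs_nonneg (u r)
  have hdrift : |∫ r in t..T, u r| ≤ q := abs_integral_le_integral_abs htT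
  have hsq : (x + ∫ r in t..T, u r) ^ 2 ≤ (|x| + q) ^ 2 :=
    sq_le_sq' (by linarith [neg_abs_le x, neg_abs_le (∫ r in t..T, u r)])
      (by linarith [le_abs_self x, le_abs_self (∫ r in t..T, u r)])
  have hconvex := add_sq_sub_mul_le_max (a := |x|) (c := s / 2) hq
    (integral_abs_le_length_of_ternary htT hu hval)
  rw [sq_abs, le_max_iff] at hconvex
  rw [integral_cost_of_ternary hu hval, le_max_iff]
  rcases hconvex with h | h
  · left; linarith
  · right; linarith

end TernaryControl

theorem example_dynamic_control_value_general
    (T s : ℝ)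
    (t x : ℝ) (htT : t ≤ T) :
    sSup {y : ℝ | ∃ u : ℝ → ℝ, Measurable u ∧
        (∀ r : ℝ, t ≤ r → r ≤ T → (u r = -1 ∨ u r = 0 ∨ u r = 1)) ∧
        y = (x + ∫ r in t..T, u r) ^ 2 - ∫ r in t..T, (if u r = 0 then s / 2 else s)}
      = if |x| + (T - t) / 2 ≤ s / 4 then x ^ 2 - s * (T - t) / 2
        else (|x| + (T - t)) ^ 2 - s * (T - t) := by
  rw [← sq_abs x, ← max_sq_sub_eq_ite (sub_nonneg.2 htT), sq_abs]
  refine IsGreatest.csSup_eq ⟨?_, ?_⟩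
  · rcases max_choice (x ^ 2 - s * (T - t) / 2) ((|x| + (T - t)) ^ 2 - s * (T - t)) with h | h <;>
      rw [h]
    · exact ⟨fun _ => 0, measurable_const, fun _ _ _ => by norm_num, by simp; ring⟩
    · rcases le_total 0 x with hx | hx
      · exact ⟨fun _ => 1, measurable_const, fun _ _ _ => by norm_num,
          by simp [abs_of_nonneg hx]; ring⟩
      · exact ⟨fun _ => -1, measurable_const, fun _ _ _ => by norm_num,
          by simp [abs_of_nonpos hx]; ring⟩
  · rintro y ⟨u, hu, hval, rfl⟩
    refine payoff_le_max_of_ternary htT hu (fun r hr => ?_) s x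
    rw [uIcc_of_le htT] at hr
    exact hval r hr.1 hr.2

/-- the value of the deterministic control problem of Example 4.1
(zero-volatility limit): controls take values in {−1, 0, 1}, the payoff is
`(x + ∫ₜᵀ u)² − ∫ₜᵀ κ(u)` with running cost `κ(0) = s/2`, `κ(±1) = s`, and the
supremum over all measurable controls equals the dynamic price function `v(t,x)`. -/
theorem example_dynamic_control_value
    (T s : ℝ) (hT : 0 < T) (hs : 0 < s)
    (t x : ℝ) (ht0 : 0 ≤ t) (htT : t ≤ T) :
    sSup {y : ℝ | ∃ u : ℝ → ℝ, Measurable u ∧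
        (∀ r : ℝ, t ≤ r → r ≤ T → (u r = -1 ∨ u r = 0 ∨ u r = 1)) ∧
        y = (x + ∫ r in t..T, u r) ^ 2 - ∫ r in t..T, (if u r = 0 then s / 2 else s)}
      = if |x| + (T - t) / 2 ≤ s / 4 then x ^ 2 - s * (T - t) / 2
        else (|x| + (T - t)) ^ 2 - s * (T - t) :=
  example_dynamic_control_value_general T s t x htT
end

section
/- Let T > 0, s > 0, and x ∈ ℝ. Define p_dyn(x) := x² − sT/2 if |x| + T/2 ≤ s/4 and p_dyn(x) := (|x| + T)² − sT otherwise; define p_sta(x) := x² + T² − sT/2 if |x| ≤ s/4 and p_sta(x) := x² + T² + 2|x|T − sT otherwise. Then p_sta(x) − p_dyn(x) = T² if |x| ≤ s/4 − T/2; p_sta(x) − p_dyn(x) = (s/2 − 2|x|)T if s/4 − T/2 < |x| < s/4; and p_sta(x) − p_dyn(x) = 0 if |x| ≥ s/4. In particular, p_sta(x) ≥ p_dyn(x) for all x. -/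
/-- in Example 4.1 the static price exceeds the dynamic price, with
the explicit difference depending on the region of the initial state `x`. -/
theorem example_static_minus_dynamic
    (T s : ℝ) (hT : 0 < T) (hs : 0 < s)
    (pdyn psta : ℝ → ℝ)
    (hpdyn : ∀ x : ℝ, pdyn x =
      if |x| + T / 2 ≤ s / 4 then x ^ 2 - s * T / 2 else (|x| + T) ^ 2 - s * T)
    (hpsta : ∀ x : ℝ, psta x =
      if |x| ≤ s / 4 then x ^ 2 + T ^ 2 - s * T / 2
      else x ^ 2 + T ^ 2 + 2 * |x| * T - s * T) :
    (∀ x : ℝ, |x| ≤ s / 4 - T / 2 → psta x - pdyn x = T ^ 2) ∧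
    (∀ x : ℝ, s / 4 - T / 2 < |x| → |x| < s / 4 → psta x - pdyn x = (s / 2 - 2 * |x|) * T) ∧
    (∀ x : ℝ, s / 4 ≤ |x| → psta x - pdyn x = 0) ∧
    (∀ x : ℝ, pdyn x ≤ psta x) := by
  have key1 : ∀ x : ℝ, |x| ≤ s / 4 - T / 2 → psta x - pdyn x = T ^ 2 := by
    intro x hx
    rw [hpdyn, hpsta, if_pos (by linarith), if_pos (by linarith)]
    ring
  have key2 : ∀ x : ℝ, s / 4 - T / 2 < |x| → |x| < s / 4 →
      psta x - pdyn x = (s / 2 - 2 * |x|) * T := by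
    intro x h1 h2
    rw [hpdyn, hpsta, if_pos (by linarith), if_neg (by linarith)]
    nlinarith [sq_abs x]
  have key3 : ∀ x : ℝ, s / 4 ≤ |x| → psta x - pdyn x = 0 := by
    intro x hx
    rcases eq_or_lt_of_le hx with h | h
    · rw [hpdyn, hpsta, if_pos (by linarith), if_neg (by linarith)]
      nlinarith [sq_abs x]
    · rw [hpdyn, hpsta, if_neg (by linarith), if_neg (by linarith)]
      nlinarith [sq_abs x]
  refine ⟨key1, key2, key3, ?_⟩
  intro x
  rcases le_or_gt (|x| + T / 2) (s / 4 - T / 2 + T / 2) with h | h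
  · have h' : |x| ≤ s / 4 - T / 2 := by linarith
    have := key1 x h'
    nlinarith
  · rcases lt_or_ge (|x|) (s / 4) with h2 | h2
    · have := key2 x (by linarith) h2
      nlinarith
    · have := key3 x h2; linarith
end
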